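/- Let x_n be the n-th largest order statistic of K i.i.d. Gamma(d,1) random variables. Then as t → 0⁺, P(x_n ≤ t) ∼ (K!/((K−n)!(n−1)!(K−n+1))) · (t^d/d!)^{K−n+1}; in particular P(x_n ≤ c/ρ) = Θ(ρ^{−d(K−n+1)}) as ρ → ∞ for any fixed c > 0. -/

import Mathlib

/-!
The `n`-th largest of `K` samples is `≤ t` exactly when at least `m = K - n + 1` samples are
`≤ t`. If `p = P(X ≤ t)`, independence gives
`C(K, m) p^m (1 - p)^(K - m) ≤ P(x_n ≤ t) ≤ C(K, m) p^m`: the lower bound counts the outcomes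
with exactly `m` small samples, the upper one is a union bound over the `m`-subsets of samples.
On `[0, t]` the Gamma density `e^{-x} x^{d-1}/(d-1)!` lies between `e^{-t}` and `1` times
`x^{d-1}/(d-1)!`, so `p ∼ t^d/d!` as `t → 0⁺`, and both bounds are `∼ C(K, m) (t^d/d!)^m`.
The `Θ` estimate is the substitution `t = c/ρ`.
-/

open MeasureTheory ProbabilityTheory Real Filter Asymptotics

/-- The `k`-th largest value (0-indexed: `k = 0` is the largest) among `v 0, …, v (K-1)`. -/
noncomputable def orderStatDesc {K : ℕ} (v : Fin K → ℝ) (k : ℕ) (hk : k < K) : ℝ :=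
  ((List.ofFn v).insertionSort (· ≥ ·)).get ⟨k, by simpa using hk⟩

open Finset
open scoped ENNReal Topology

theorem List.countP_ofFn {α : Type*} {N : ℕ} (f : Fin N → α) (p : α → Prop) [DecidablePred p] :
    (List.ofFn f).countP (fun a => decide (p a)) = #{i | p (f i)} := by
  rw [← Multiset.coe_countP, ← Fin.univ_val_map, Multiset.countP_map, ← card_val, filter_val]

theorem Antitone.le_iff_sub_le_card_filter_le {α : Type*} [LinearOrder α] {N : ℕ}
    {f : Fin N → α} (hf : Antitone f) (k : Fin N) (t : α) : f k ≤ t ↔ N - k ≤ #{i | f i ≤ t} := by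
  constructor
  · intro hk
    calc N - k = #(Ici k) := (Fin.card_Ici k).symm
      _ ≤ #{i | f i ≤ t} := card_le_card fun i hi =>
          mem_filter.2 ⟨mem_univ _, (hf (mem_Ici.1 hi)).trans hk⟩
  · intro hcard
    by_contra! hk
    have : #{i | f i ≤ t} ≤ #(Ioi k) := card_le_card fun i hi =>
      mem_Ioi.2 (lt_of_not_ge fun hik => ((mem_filter.1 hi).2.trans_lt hk).not_ge (hf hik))
    rw [Fin.card_Ioi] at this
    omega

theorem orderStatDesc_le_iff {K : ℕ} (v : Fin K → ℝ) (k : ℕ) (hk : k < K) (t : ℝ) :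
    orderStatDesc v k hk ≤ t ↔ K - k ≤ #{i | v i ≤ t} := by
  set L := (List.ofFn v).insertionSort (· ≥ ·)
  have hcount : #{j | L.get j ≤ t} = #{i | v i ≤ t} := by
    rw [← List.countP_ofFn L.get (· ≤ t), List.ofFn_get,
      ((List.ofFn v).perm_insertionSort _).countP_eq, List.countP_ofFn v (· ≤ t)]
  have := (List.sortedGE_insertionSort (l := List.ofFn v)).antitone_get
    |>.le_iff_sub_le_card_filter_le ⟨k, by simpa [L] using hk⟩ t
  rw [hcount] at this
  exact this.trans <| by simp only [List.length_insertionSort, List.length_ofFn]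

theorem ProbabilityTheory.iIndepFun.iIndepSet_preimage {ι Ω β : Type*} [MeasurableSpace Ω]
    [MeasurableSpace β] {μ : Measure Ω} {X : ι → Ω → β} (hX : iIndepFun X μ) {s : ι → Set β}
    (hs : ∀ i, MeasurableSet (s i)) : iIndepSet (fun i => X i ⁻¹' s i) μ :=
  (iIndepSet_iff_iIndep _ _).2 <| iIndep_of_iIndep_of_le ((iIndepFun_iff_iIndep _ _ _).1 hX)
    fun i => MeasurableSpace.generateFrom_le fun _ h => by
      rw [Set.mem_singleton_iff.1 h]; exact ⟨s i, hs i, rfl⟩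

section Binomial

variable {ι Ω : Type*} [Fintype ι] [MeasurableSpace Ω] {μ : Measure Ω} {A : ι → Set Ω}
  {p : ℝ≥0∞}

open scoped Classical in
theorem ProbabilityTheory.iIndepSet.measure_le_card_mem_le (hA : iIndepSet A μ)
    (hp : ∀ i, μ (A i) = p) (m : ℕ) :
    μ {ω | m ≤ #{i | ω ∈ A i}} ≤ (Fintype.card ι).choose m * p ^ m := by
  have hcover : {ω | m ≤ #{i | ω ∈ A i}} ⊆ ⋃ S ∈ powersetCard m univ, ⋂ i ∈ S, A i := by
    intro ω hω
    obtain ⟨S, hS, hScard⟩ := exists_subset_card_eq hω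
    exact Set.mem_biUnion (mem_powersetCard_univ.2 hScard)
      (Set.mem_iInter₂.2 fun i hi => (mem_filter.1 (hS hi)).2)
  calc μ {ω | m ≤ #{i | ω ∈ A i}}
      ≤ ∑ S ∈ powersetCard m univ, μ (⋂ i ∈ S, A i) :=
        (measure_mono hcover).trans (measure_biUnion_finset_le _ _)
    _ = (Fintype.card ι).choose m * p ^ m := by
        rw [sum_congr rfl fun S hS => by
          rw [hA.meas_biInter, prod_congr rfl fun i _ => hp i, prod_const,
            (mem_powersetCard_univ.1 hS)], sum_const, card_powersetCard, card_univ, nsmul_eq_mul]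

theorem ProbabilityTheory.iIndepSet.measure_iInter_ite [DecidableEq ι] (hA : iIndepSet A μ)
    (hAm : ∀ i, NullMeasurableSet (A i) μ) (hp : ∀ i, μ (A i) = p) (S : Finset ι) :
    μ (⋂ i, if i ∈ S then A i else (A i)ᶜ) = p ^ #S * (1 - p) ^ (Fintype.card ι - #S) := by
  have := hA.isProbabilityMeasure
  have hite (i : ι) : μ (if i ∈ S then A i else (A i)ᶜ) = if i ∈ S then p else 1 - p := by
    split_ifs
    exacts [hp i, (prob_compl_eq_one_sub₀ (hAm i)).trans (by rw [hp i])]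
  rw [((iIndepSet_iff_iIndep _ _).1 hA).meas_iInter fun i => by
      split_ifs
      exacts [MeasurableSpace.measurableSet_generateFrom (Set.mem_singleton _),
        (MeasurableSpace.measurableSet_generateFrom (Set.mem_singleton _)).compl],
    prod_congr rfl fun i _ => hite i, prod_ite, prod_const, prod_const, filter_not,
    filter_mem_eq_inter, univ_inter, ← compl_eq_univ_sdiff, card_compl]

open scoped Classical in
theorem ProbabilityTheory.iIndepSet.measure_card_mem_eq (hA : iIndepSet A μ)
    (hAm : ∀ i, NullMeasurableSet (A i) μ) (hp : ∀ i, μ (A i) = p) (m : ℕ) :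
    μ {ω | #{i | ω ∈ A i} = m} =
      (Fintype.card ι).choose m * p ^ m * (1 - p) ^ (Fintype.card ι - m) := by
  let B : Finset ι → Set Ω := fun S => ⋂ i, if i ∈ S then A i else (A i)ᶜ
  have hB (S : Finset ι) (ω : Ω) : ω ∈ B S ↔ ({i | ω ∈ A i} : Finset ι) = S := by
    simp only [B, Set.mem_iInter, Finset.ext_iff, mem_filter, mem_univ, true_and]
    refine forall_congr' fun i => ?_
    split_ifs with hi <;> simp [hi]
  have hunion : {ω | #{i | ω ∈ A i} = m} = ⋃ S ∈ powersetCard m univ, B S := by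
    ext ω
    simp only [Set.mem_ofPred_eq, Set.mem_iUnion, hB, mem_powersetCard_univ, exists_prop,
      exists_eq_right']
  have hBdisj : (powersetCard m (univ : Finset ι) : Set (Finset ι)).Pairwise
      (Function.onFun (AEDisjoint μ) B) :=
    fun S _ T _ hST => Disjoint.aedisjoint <| Set.disjoint_left.2 fun ω hS hT =>
      hST (((hB S ω).1 hS).symm.trans ((hB T ω).1 hT))
  have hBm (S : Finset ι) : NullMeasurableSet (B S) μ :=
    .iInter fun i => by split_ifs; exacts [hAm i, (hAm i).compl]
  rw [hunion, measure_biUnion_finset₀ hBdisj fun S _ => hBm S, sum_congr rfl fun S hS => by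
      rw [hA.measure_iInter_ite hAm hp, (mem_powersetCard_univ.1 hS)],
    sum_const, card_powersetCard, card_univ, nsmul_eq_mul, mul_assoc]

end Binomial

open scoped Classical in
theorem setOf_orderStatDesc_le {Ω : Type*} {K k : ℕ} (hk : k < K) (X : Fin K → Ω → ℝ) (t : ℝ) :
    {ω | orderStatDesc (fun i => X i ω) k hk ≤ t} =
      {ω | K - k ≤ #{i | ω ∈ X i ⁻¹' Set.Iic t}} := by
  ext ω
  simp only [Set.mem_ofPred_eq, orderStatDesc_le_iff, Set.mem_preimage, Set.mem_Iic]

section OrderStatistic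

variable {Ω : Type*} [MeasurableSpace Ω] {P : Measure Ω} {K k : ℕ} (hk : k < K)
  {X : Fin K → Ω → ℝ} {t : ℝ} {p : ℝ≥0∞}

theorem measure_orderStatDesc_le_le (hX : iIndepFun X P)
    (hp : ∀ i, P (X i ⁻¹' Set.Iic t) = p) :
    P {ω | orderStatDesc (fun i => X i ω) k hk ≤ t} ≤ K.choose (K - k) * p ^ (K - k) := by
  classical
  rw [setOf_orderStatDesc_le]
  simpa using (hX.iIndepSet_preimage fun _ => measurableSet_Iic).measure_le_card_mem_le hp (K - k)

theorem le_measure_orderStatDesc_le (hX : iIndepFun X P) (hXm : ∀ i, AEMeasurable (X i) P)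
    (hp : ∀ i, P (X i ⁻¹' Set.Iic t) = p) :
    K.choose (K - k) * p ^ (K - k) * (1 - p) ^ k ≤
      P {ω | orderStatDesc (fun i => X i ω) k hk ≤ t} := by
  classical
  have hexact := (hX.iIndepSet_preimage fun _ => measurableSet_Iic).measure_card_mem_eq
    (fun i => (hXm i).nullMeasurableSet_preimage measurableSet_Iic) hp (K - k)
  rw [Fintype.card_fin, Nat.sub_sub_self hk.le] at hexact
  rw [setOf_orderStatDesc_le, ← hexact]
  exact measure_mono fun _ h => Eq.ge h

end OrderStatistic

noncomputable def erlangPDF (d : ℕ) : ℝ → ℝ≥0∞ :=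
  (Set.Ici 0).indicator fun x => ENNReal.ofReal (exp (-x) * x ^ (d - 1) / (d - 1).factorial)

theorem lintegral_Icc_pow_div_factorial (d : ℕ) {t : ℝ} (ht : 0 ≤ t) :
    ∫⁻ x in Set.Icc 0 t, ENNReal.ofReal (x ^ d / d.factorial) =
      ENNReal.ofReal (t ^ (d + 1) / (d + 1).factorial) := by
  rw [← ofReal_integral_eq_lintegral_ofReal ((by fun_prop : Continuous fun x : ℝ =>
      x ^ d / d.factorial).integrableOn_Icc)
    (ae_restrict_of_forall_mem measurableSet_Icc fun x hx => by have := hx.1; positivity),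
    integral_Icc_eq_integral_Ioc, ← intervalIntegral.integral_of_le ht,
    intervalIntegral.integral_div, integral_pow, Nat.factorial_succ]
  congr 1
  push_cast
  field_simp
  simp

theorem withDensity_erlangPDF_Iic (d : ℕ) (t : ℝ) :
    volume.withDensity (erlangPDF d) (Set.Iic t) =
      ∫⁻ x in Set.Icc 0 t, ENNReal.ofReal (exp (-x) * x ^ (d - 1) / (d - 1).factorial) := by
  rw [withDensity_apply _ measurableSet_Iic, erlangPDF, lintegral_indicator measurableSet_Ici,
      Measure.restrict_restrict measurableSet_Ici, Set.Ici_inter_Iic]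

theorem withDensity_erlangPDF_Iic_le {d : ℕ} (hd : 1 ≤ d) {t : ℝ} (ht : 0 ≤ t) :
    volume.withDensity (erlangPDF d) (Set.Iic t) ≤ ENNReal.ofReal (t ^ d / d.factorial) := by
  obtain ⟨d, rfl⟩ := Nat.exists_eq_add_of_le' hd
  rw [withDensity_erlangPDF_Iic, Nat.add_sub_cancel, ← lintegral_Icc_pow_div_factorial d ht]
  refine setLIntegral_mono (by fun_prop) fun x hx => ENNReal.ofReal_le_ofReal ?_
  have := hx.1
  have : exp (-x) ≤ 1 := exp_le_one_iff.2 (by linarith)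
  rw [mul_div_assoc]
  exact mul_le_of_le_one_left (by positivity) this

theorem le_withDensity_erlangPDF_Iic {d : ℕ} (hd : 1 ≤ d) {t : ℝ} (ht : 0 ≤ t) :
    ENNReal.ofReal (exp (-t) * (t ^ d / d.factorial)) ≤
      volume.withDensity (erlangPDF d) (Set.Iic t) := by
  obtain ⟨d, rfl⟩ := Nat.exists_eq_add_of_le' hd
  rw [withDensity_erlangPDF_Iic, Nat.add_sub_cancel, ENNReal.ofReal_mul (exp_pos _).le,
    ← lintegral_Icc_pow_div_factorial d ht, ← lintegral_const_mul _ (by fun_prop)]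
  refine setLIntegral_mono (by fun_prop) fun x hx => ?_
  rw [← ENNReal.ofReal_mul (exp_pos _).le, mul_div_assoc]
  exact ENNReal.ofReal_le_ofReal (by have := hx.1; gcongr; exact hx.2)

theorem Asymptotics.isEquivalent_of_mul_le_of_le {α : Type*} {l : Filter α} {f g a : α → ℝ}
    (ha : Tendsto a l (𝓝 1)) (hlower : ∀ᶠ x in l, a x * g x ≤ f x)
    (hupper : ∀ᶠ x in l, f x ≤ g x) (hg : ∀ᶠ x in l, 0 ≤ g x) : f ~[l] g := by
  refine IsLittleO.of_bound fun ε hε => ?_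
  filter_upwards [hlower, hupper, hg, ha.eventually (eventually_ge_nhds (by linarith : 1 - ε < 1))]
    with x hlo hup hgx hax
  rw [Pi.sub_apply, Real.norm_of_nonpos (by linarith), Real.norm_of_nonneg hgx]
  nlinarith

theorem withDensity_erlangPDF_Iic_isEquivalent {d : ℕ} (hd : 1 ≤ d) :
    (fun t => (volume.withDensity (erlangPDF d) (Set.Iic t)).toReal) ~[𝓝[>] 0]
      fun t => t ^ d / d.factorial := by
  have hexp : Tendsto (fun t : ℝ => exp (-t)) (𝓝[>] 0) (𝓝 1) :=
    ((by fun_prop : Continuous fun t : ℝ => exp (-t)).tendsto' 0 1 (by simp)).mono_left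
      nhdsWithin_le_nhds
  refine isEquivalent_of_mul_le_of_le hexp ?_ ?_ ?_ <;>
    filter_upwards [self_mem_nhdsWithin] with t (ht : 0 < t)
  · exact (ENNReal.ofReal_le_iff_le_toReal ((withDensity_erlangPDF_Iic_le hd ht.le).trans_lt
      ENNReal.ofReal_lt_top).ne).1 (le_withDensity_erlangPDF_Iic hd ht.le)
  · exact ENNReal.toReal_le_of_le_ofReal (by positivity) (withDensity_erlangPDF_Iic_le hd ht.le)
  · positivity

theorem withDensity_erlangPDF_ne_zero {d : ℕ} (hd : 1 ≤ d) :
    volume.withDensity (erlangPDF d) ≠ 0 := by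
  intro h
  have := le_withDensity_erlangPDF_Iic hd zero_le_one
  rw [h, Measure.coe_zero, Pi.zero_apply, nonpos_iff_eq_zero, ENNReal.ofReal_eq_zero] at this
  exact this.not_gt (by positivity)

theorem measure_orderStatDesc_le_isEquivalent {Ω : Type*} [MeasurableSpace Ω] {P : Measure Ω}
    {d K k : ℕ} (hd : 1 ≤ d) (hk : k < K) {X : Fin K → Ω → ℝ} (hX : iIndepFun X P)
    (hdens : ∀ i, P.map (X i) = volume.withDensity (erlangPDF d)) :
    (fun t => (P {ω | orderStatDesc (fun i => X i ω) k hk ≤ t}).toReal) ~[𝓝[>] 0]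
      fun t => (K.choose (K - k) : ℝ) * (t ^ d / d.factorial) ^ (K - k) := by
  have := hX.isProbabilityMeasure
  set ν := volume.withDensity (erlangPDF d)
  have hXm (i : Fin K) : AEMeasurable (X i) P :=
    .of_map_ne_zero (hdens i ▸ withDensity_erlangPDF_ne_zero hd)
  have hp (t : ℝ) (i : Fin K) : P (X i ⁻¹' Set.Iic t) = ν (Set.Iic t) := by
    rw [← Measure.map_apply_of_aemeasurable (hXm i) measurableSet_Iic, hdens i]
  have hν (t : ℝ) : ν (Set.Iic t) ≤ 1 := hp t ⟨k, hk⟩ ▸ prob_le_one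
  set p : ℝ → ℝ := fun t => (ν (Set.Iic t)).toReal
  have hupper (t : ℝ) : (P {ω | orderStatDesc (fun i => X i ω) k hk ≤ t}).toReal ≤
      K.choose (K - k) * p t ^ (K - k) := by
    have hfin : (K.choose (K - k) : ℝ≥0∞) * ν (Set.Iic t) ^ (K - k) ≠ ⊤ := by
      finiteness [(hν t).trans_lt ENNReal.one_lt_top]
    simpa only [ENNReal.toReal_mul, ENNReal.toReal_natCast, ENNReal.toReal_pow] using
      ENNReal.toReal_mono hfin (measure_orderStatDesc_le_le hk hX (hp t))
  have hlower (t : ℝ) : (1 - p t) ^ k * (K.choose (K - k) * p t ^ (K - k)) ≤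
      (P {ω | orderStatDesc (fun i => X i ω) k hk ≤ t}).toReal := by
    have := ENNReal.toReal_mono (measure_ne_top _ _) (le_measure_orderStatDesc_le hk hX hXm (hp t))
    simp only [ENNReal.toReal_mul, ENNReal.toReal_natCast, ENNReal.toReal_pow,
      ENNReal.toReal_sub_of_le (hν t) ENNReal.one_ne_top, ENNReal.toReal_one] at this
    linarith
  have hpq := withDensity_erlangPDF_Iic_isEquivalent hd
  have hq0 : Tendsto (fun t : ℝ => t ^ d / d.factorial) (𝓝[>] 0) (𝓝 0) :=
    ((by fun_prop : Continuous fun t : ℝ => t ^ d / d.factorial).tendsto' 0 0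
      (by simp [zero_pow (by omega : d ≠ 0)])).mono_left nhdsWithin_le_nhds
  have hp0 : Tendsto (fun t => (1 - p t) ^ k) (𝓝[>] 0) (𝓝 1) := by
    have := ((hpq.symm.tendsto_nhds hq0).const_sub 1).pow k
    rwa [sub_zero, one_pow] at this
  refine (isEquivalent_of_mul_le_of_le hp0 (.of_forall hlower) (.of_forall hupper)
    (.of_forall fun t => by positivity)).trans ?_
  exact IsEquivalent.refl.mul (hpq.pow (K - k))

theorem Nat.cast_choose_sub_add_one {n K : ℕ} (hn : 1 ≤ n) (hnK : n ≤ K) :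
    (K.choose (K - n + 1) : ℝ) =
      K.factorial / ((K - n).factorial * (n - 1).factorial * (K - n + 1)) := by
  rw [Nat.cast_choose ℝ (by omega : K - n + 1 ≤ K), Nat.factorial_succ,
    (by omega : K - (K - n + 1) = n - 1)]
  push_cast [Nat.cast_sub hnK]
  ring

/-- Tail of the `n`-th largest order statistic of `K` i.i.d. `Gamma(d,1)` samples:
`P(x_n ≤ t) ∼ (K!/((K-n)!(n-1)!(K-n+1))) (t^d/d!)^{K-n+1}` as `t → 0⁺`; in particular
`P(x_n ≤ c/ρ) = Θ(ρ^{-d(K-n+1)})` as `ρ → ∞` for any fixed `c > 0`. -/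
theorem order_statistic_small_tail_asymptotics
    {Ω : Type*} [MeasurableSpace Ω] (P : Measure Ω)
    (d K n : ℕ) (hd : 1 ≤ d) (hn1 : 1 ≤ n) (hnK : n ≤ K)
    (X : Fin K → Ω → ℝ)
    (hiid : iIndepFun X P)
    (hdens : ∀ i, P.map (X i) = volume.withDensity (fun x =>
        Set.indicator (Set.Ici (0 : ℝ))
          (fun x => ENNReal.ofReal (Real.exp (-x) * x ^ (d - 1) / (d - 1).factorial)) x)) :
    Filter.Tendsto
      (fun t : ℝ =>
        (P {ω | orderStatDesc (fun i => X i ω) (n - 1) (by omega) ≤ t}).toReal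
          / ((K.factorial : ℝ) / ((K - n).factorial * (n - 1).factorial * (K - n + 1))
              * (t ^ d / d.factorial) ^ (K - n + 1)))
      (nhdsWithin 0 (Set.Ioi 0)) (nhds 1)
    ∧ ∀ c : ℝ, 0 < c →
      (fun ρ : ℝ =>
          (P {ω | orderStatDesc (fun i => X i ω) (n - 1) (by omega) ≤ c / ρ}).toReal)
        =Θ[Filter.atTop] fun ρ : ℝ => 1 / ρ ^ (d * (K - n + 1)) := by
  have hequiv := measure_orderStatDesc_le_isEquivalent hd (by omega : n - 1 < K) hiid hdens
  rw [(by omega : K - (n - 1) = K - n + 1)] at hequiv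
  have hC : (0 : ℝ) < K.choose (K - n + 1) := by exact_mod_cast Nat.choose_pos (by omega)
  refine ⟨?_, fun c hc => ?_⟩
  · rw [← Nat.cast_choose_sub_add_one hn1 hnK]
    refine (isEquivalent_iff_tendsto_one ?_).1 hequiv
    filter_upwards [self_mem_nhdsWithin] with t (ht : 0 < t)
    exact (mul_pos hC (by positivity)).ne'
  have hscale : Tendsto (fun ρ : ℝ => c / ρ) atTop (𝓝[>] 0) :=
    tendsto_nhdsWithin_iff.2 ⟨tendsto_const_nhds.div_atTop tendsto_id,
      eventually_gt_atTop 0 |>.mono fun ρ hρ => div_pos hc hρ⟩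
  refine (hequiv.comp_tendsto hscale).isTheta.trans ?_
  rw [show _ ∘ _ = fun ρ : ℝ => (K.choose (K - n + 1) * (c ^ d / d.factorial) ^ (K - n + 1) : ℝ) *
      (1 / ρ ^ (d * (K - n + 1))) by
    funext ρ; simp only [Function.comp, div_pow, pow_mul]; ring]
  exact (isTheta_const_mul_left (mul_pos hC (by positivity)).ne').2 isTheta_rfl
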